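/- arXiv:0712.2072 — 8 statements merged into one kernel-verified Lean document; each statement's English description precedes it below -/
import Mathlib

section
/- Let A be a Banach algebra, φ a nonzero character on A, and X a closed linear A-left-invariant subspace of A* containing all nonzero characters of A. Suppose P : A* → X is a continuous linear map with P(ψ) a character for every character ψ, and P(f·a) = P(f)·a for all f ∈ A* and a ∈ A. Then X is φ-left amenable (i.e., there exists m ∈ X* with m(φ) = 1 and m(f·a) = φ(a)m(f) for all f ∈ X, a ∈ A) if and only if A is φ-amenable (i.e., such a functional exists on all of A*). -/
open scoped Topology

namespace CharAmen


variable {E : Type*} [NormedAddCommGroup E] [NormedSpace ℂ E]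

noncomputable def fdotB (μ : E →L[ℂ] E →L[ℂ] E) (f : E →L[ℂ] ℂ) (x : E) : E →L[ℂ] ℂ :=
  f.comp (μ x)

@[simp] lemma fdotB_apply (μ : E →L[ℂ] E →L[ℂ] E) (f : E →L[ℂ] ℂ) (x y : E) :
    fdotB μ f x y = f (μ x y) := rfl

lemma fdotB_norm_le (μ : E →L[ℂ] E →L[ℂ] E) (f : E →L[ℂ] ℂ) (x : E) :
    ‖fdotB μ f x‖ ≤ ‖f‖ * (‖μ‖ * ‖x‖) :=
  (ContinuousLinearMap.opNorm_comp_le f (μ x)).trans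
    (by gcongr; exact μ.le_opNorm x)

noncomputable def mdotB (μ : E →L[ℂ] E →L[ℂ] E) (m : (E →L[ℂ] ℂ) →L[ℂ] ℂ)
    (f : E →L[ℂ] ℂ) : E →L[ℂ] ℂ :=
  LinearMap.mkContinuous
    { toFun := fun x => m (fdotB μ f x)
      map_add' := by
        intro x y
        show m (fdotB μ f (x + y)) = m (fdotB μ f x) + m (fdotB μ f y)
        have : fdotB μ f (x + y) = fdotB μ f x + fdotB μ f y := by
          ext z; simp [fdotB]
        rw [this, map_add]
      map_smul' := by
        intro c x
        show m (fdotB μ f (c • x)) = c • m (fdotB μ f x)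
        have : fdotB μ f (c • x) = c • fdotB μ f x := by
          ext z; simp [fdotB]
        rw [this, map_smul] }
    (‖m‖ * ‖f‖ * ‖μ‖)
    (by
      intro x
      calc ‖m (fdotB μ f x)‖ ≤ ‖m‖ * ‖fdotB μ f x‖ := m.le_opNorm _
        _ ≤ ‖m‖ * (‖f‖ * (‖μ‖ * ‖x‖)) := by
            gcongr
            exact fdotB_norm_le μ f x
        _ = ‖m‖ * ‖f‖ * ‖μ‖ * ‖x‖ := by ring)

@[simp] lemma mdotB_apply (μ : E →L[ℂ] E →L[ℂ] E) (m : (E →L[ℂ] ℂ) →L[ℂ] ℂ)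
    (f : E →L[ℂ] ℂ) (x : E) : mdotB μ m f x = m (fdotB μ f x) := rfl

lemma mdotB_norm_le (μ : E →L[ℂ] E →L[ℂ] E) (m : (E →L[ℂ] ℂ) →L[ℂ] ℂ) (f : E →L[ℂ] ℂ) :
    ‖mdotB μ m f‖ ≤ ‖m‖ * ‖f‖ * ‖μ‖ :=
  LinearMap.mkContinuous_norm_le _ (by positivity) _

/-- First Arens product relative to μ: `⟨n ⋆ m, f⟩ = ⟨n, m·f⟩`. -/
noncomputable def arensB (μ : E →L[ℂ] E →L[ℂ] E) (n m : (E →L[ℂ] ℂ) →L[ℂ] ℂ) :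
    (E →L[ℂ] ℂ) →L[ℂ] ℂ :=
  LinearMap.mkContinuous
    { toFun := fun f => n (mdotB μ m f)
      map_add' := by
        intro f g
        show n (mdotB μ m (f + g)) = n (mdotB μ m f) + n (mdotB μ m g)
        have : mdotB μ m (f + g) = mdotB μ m f + mdotB μ m g := by
          ext x; simp [fdotB]
        rw [this, map_add]
      map_smul' := by
        intro c f
        show n (mdotB μ m (c • f)) = c • n (mdotB μ m f)
        have : mdotB μ m (c • f) = c • mdotB μ m f := by
          ext x; simp [fdotB]
        rw [this, map_smul] }
    (‖n‖ * ‖m‖ * ‖μ‖)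
    (by
      intro f
      calc ‖n (mdotB μ m f)‖ ≤ ‖n‖ * ‖mdotB μ m f‖ := n.le_opNorm _
        _ ≤ ‖n‖ * (‖m‖ * ‖f‖ * ‖μ‖) := by
            gcongr
            exact mdotB_norm_le μ m f
        _ = ‖n‖ * ‖m‖ * ‖μ‖ * ‖f‖ := by ring)

@[simp] lemma arensB_apply (μ : E →L[ℂ] E →L[ℂ] E) (n m : (E →L[ℂ] ℂ) →L[ℂ] ℂ)
    (f : E →L[ℂ] ℂ) : arensB μ n m f = n (mdotB μ m f) := rfl


section Ring
variable {A : Type*} [NormedRing A] [NormedAlgebra ℂ A]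

/-- `f · a` : `⟨f·a, b⟩ = ⟨f, a*b⟩`. -/
noncomputable def fdot (f : A →L[ℂ] ℂ) (a : A) : A →L[ℂ] ℂ :=
  f.comp (ContinuousLinearMap.mul ℂ A a)

@[simp] lemma fdot_apply (f : A →L[ℂ] ℂ) (a b : A) : fdot f a b = f (a * b) := rfl

/-- Nonzero (continuous) characters of `A`. -/
def IsChar (φ : A →L[ℂ] ℂ) : Prop := φ ≠ 0 ∧ ∀ a b, φ (a * b) = φ a * φ b

/-- A `φ`-mean on `A*`. -/
def IsMean (φ : A →L[ℂ] ℂ) (m : (A →L[ℂ] ℂ) →L[ℂ] ℂ) : Prop :=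
  m φ = 1 ∧ ∀ (f : A →L[ℂ] ℂ) (a : A), m (fdot f a) = φ a * m f

/-- A bounded right approximate identity contained in `S ⊆ A`, for `S`. -/
def HasBRAI (S : Set A) : Prop :=
  ∃ (ι : Type) (l : Filter ι) (e : ι → A), l.NeBot ∧ (∀ i, e i ∈ S) ∧
    (∃ M, ∀ i, ‖e i‖ ≤ M) ∧ ∀ a ∈ S, Filter.Tendsto (fun i => ‖a * e i - a‖) l (𝓝 0)

/-- The first Arens product on `A**`. -/
noncomputable def arens (n m : (A →L[ℂ] ℂ) →L[ℂ] ℂ) : (A →L[ℂ] ℂ) →L[ℂ] ℂ :=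
  arensB (ContinuousLinearMap.mul ℂ A) n m

end Ring

/-- Theorem 3.1 (`X` is `φ`-left amenable iff `A` is `φ`-amenable). -/
theorem phi_left_amenable_iff_phi_amenable
    {A : Type*} [NormedRing A] [NormedAlgebra ℂ A] [CompleteSpace A]
    (φ : A →L[ℂ] ℂ) (hφ : IsChar φ)
    (X : Submodule ℂ (A →L[ℂ] ℂ)) (hXclosed : IsClosed (X : Set (A →L[ℂ] ℂ)))
    (hinv : ∀ f ∈ X, ∀ a : A, fdot f a ∈ X)
    (hchars : ∀ ψ : A →L[ℂ] ℂ, IsChar ψ → ψ ∈ X)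
    (P : (A →L[ℂ] ℂ) →L[ℂ] (A →L[ℂ] ℂ))
    (hPX : ∀ f : A →L[ℂ] ℂ, P f ∈ X)
    (hPchar : ∀ ψ : A →L[ℂ] ℂ, IsChar ψ → IsChar (P ψ))
    (hPmod : ∀ (f : A →L[ℂ] ℂ) (a : A), P (fdot f a) = fdot (P f) a) :
    (∃ m : ↥X →L[ℂ] ℂ, m ⟨φ, hchars φ hφ⟩ = 1 ∧
        ∀ (f : ↥X) (a : A), m ⟨fdot (f : A →L[ℂ] ℂ) a, hinv _ f.2 a⟩ = φ a * m f) ↔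
    (∃ m : (A →L[ℂ] ℂ) →L[ℂ] ℂ, IsMean φ m) := by
  -- Key fact: P φ = φ.
  have hfdotφ : ∀ a : A, fdot φ a = φ a • φ := by
    intro a; ext b; simp [fdot, hφ.2]
  have hPφ : P φ = φ := by
    obtain ⟨hne, hmul⟩ := hPchar φ hφ
    obtain ⟨b, hb⟩ : ∃ b, P φ b ≠ 0 := by
      by_contra h
      push_neg at h
      exact hne (ContinuousLinearMap.ext h)
    ext a
    have h1 : (P φ) (a * b) = φ a * (P φ) b := by
      have := hPmod φ a
      rw [hfdotφ, map_smul] at this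
      calc (P φ) (a * b) = fdot (P φ) a b := rfl
        _ = (φ a • P φ) b := by rw [← this]
        _ = φ a * (P φ) b := rfl
    have h2 : (P φ) (a * b) = (P φ) a * (P φ) b := hmul a b
    have := h1.symm.trans h2
    exact (mul_right_cancel₀ hb this).symm
  constructor
  · rintro ⟨m, hm1, hm2⟩
    refine ⟨m.comp (P.codRestrict X hPX), ?_, ?_⟩
    · have : (⟨P φ, hPX φ⟩ : ↥X) = ⟨φ, hchars φ hφ⟩ := Subtype.ext hPφ
      show m ⟨P φ, hPX φ⟩ = 1
      rw [this, hm1]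
    · intro f a
      show m ⟨P (fdot f a), hPX _⟩ = φ a * m ⟨P f, hPX f⟩
      have : (⟨P (fdot f a), hPX _⟩ : ↥X) =
          ⟨fdot ((⟨P f, hPX f⟩ : ↥X) : A →L[ℂ] ℂ) a, hinv _ (hPX f) a⟩ :=
        Subtype.ext (hPmod f a)
      rw [this, hm2 ⟨P f, hPX f⟩ a]
  · rintro ⟨m, hm1, hm2⟩
    refine ⟨m.comp X.subtypeL, ?_, ?_⟩
    · exact hm1
    · intro f a
      exact hm2 f a

end CharAmen
end

section
/- Two φ-means m and m' on A* are equal if and only if they agree on A*·A = {f·a : f ∈ A*, a ∈ A}. -/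
open scoped Topology

namespace CharAmen


variable {E : Type*} [NormedAddCommGroup E] [NormedSpace ℂ E]

/-- two `φ`-means agree iff they agree on `A* · A`. -/
theorem means_eq_iff_eq_on_AstarA
    {A : Type*} [NormedRing A] [NormedAlgebra ℂ A] [CompleteSpace A]
    (φ : A →L[ℂ] ℂ) (hφ : IsChar φ)
    (m m' : (A →L[ℂ] ℂ) →L[ℂ] ℂ) (hm : IsMean φ m) (hm' : IsMean φ m') :
    m = m' ↔ ∀ (f : A →L[ℂ] ℂ) (a : A), m (fdot f a) = m' (fdot f a) := by
  constructor
  · rintro rfl _ _; rfl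
  · intro h
    obtain ⟨a₀, ha₀⟩ : ∃ a₀, φ a₀ ≠ 0 := by
      by_contra hc
      push_neg at hc
      exact hφ.1 (by ext x; simp [hc x])
    set a := (φ a₀)⁻¹ • a₀ with ha
    have hφa : φ a = 1 := by simp [ha, inv_mul_cancel₀ ha₀]
    ext f
    have h1 := hm.2 f a
    have h2 := hm'.2 f a
    have := h f a
    rw [h1, h2, hφa, one_mul, one_mul] at this
    exact this

end CharAmen
end

section
/- Let A be a commutative Banach algebra and φ a character of A. If A is φ-amenable with φ-mean m, then for every f ∈ A*, the element λφ lies in the weak-* closure of K(f) = {f·a : a ∈ A}, where λ = m(f). -/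
open scoped Topology

namespace CharAmen


variable {E : Type*} [NormedAddCommGroup E] [NormedSpace ℂ E]

/-- Key finite-dimensional step: on any finite set one can hit `m f • φ` exactly. -/
lemma exists_exact_hit
    {A : Type*} [NormedCommRing A] [NormedAlgebra ℂ A]
    (φ : A →L[ℂ] ℂ) (hφ : IsChar φ)
    (m : (A →L[ℂ] ℂ) →L[ℂ] ℂ) (hm : IsMean φ m) (f : A →L[ℂ] ℂ) (s : Finset A) :
    ∃ a : A, ∀ b ∈ s, f (a * b) = m f * φ b := by
  classical
  -- the linear map `a ↦ (f (a * b))_{b ∈ s}`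
  set T : A →ₗ[ℂ] (↥s → ℂ) :=
    { toFun := fun a j => f (a * (j : A))
      map_add' := by intro x y; funext j; simp [add_mul]
      map_smul' := by intro c x; funext j; simp [smul_mul_assoc] }
  set v : ↥s → ℂ := fun j => m f * φ (j : A)
  have hv : v ∈ LinearMap.range T := by
    by_contra hv
    obtain ⟨ℓ, hℓv, hℓ⟩ :=
      (LinearMap.range T).exists_dual_map_eq_bot_of_notMem hv inferInstance
    have hker : ∀ a : A, ℓ (T a) = 0 := by
      intro a
      have : ℓ (T a) ∈ (LinearMap.range T).map ℓ :=
        Submodule.mem_map_of_mem (LinearMap.mem_range_self T a)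
      rw [hℓ] at this
      simpa using this
    set c : ↥s → ℂ := fun j => ℓ (fun i => if j = i then (1:ℂ) else 0)
    have hℓ_eq : ∀ g : ↥s → ℂ, ℓ g = ∑ j, g j * c j := by
      intro g
      simpa [c, smul_eq_mul] using ℓ.pi_apply_eq_sum_univ g
    set b : A := ∑ j : s, c j • (j : A)
    have hfb : ∀ a : A, f (a * b) = 0 := by
      intro a
      have : f (a * b) = ℓ (T a) := by
        rw [hℓ_eq]
        simp only [b, Finset.mul_sum, map_sum, mul_smul_comm, map_smul]
        simp [T, smul_eq_mul, mul_comm]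
      rw [this, hker]
    have hfdot : fdot f b = 0 := by
      ext a
      simpa [fdot, mul_comm] using hfb a
    have h0 : φ b * m f = 0 := by
      rw [← hm.2 f b, hfdot, map_zero]
    have hφb : φ b = ∑ j : s, c j * φ (j : A) := by
      simp [b, smul_eq_mul]
    have : ℓ v = 0 := by
      rw [hℓ_eq]
      calc ∑ j, v j * c j = (∑ j : s, c j * φ (j : A)) * m f := by
            rw [Finset.sum_mul]; congr 1; funext j; simp [v]; ring
        _ = φ b * m f := by rw [hφb]
        _ = 0 := h0
    exact hℓv this
  obtain ⟨a, ha⟩ := hv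
  refine ⟨a, fun b hb => ?_⟩
  have := congrFun ha ⟨b, hb⟩
  simpa [T, v] using this

/-- if `m` is a `φ`-mean then `m(f)·φ` is in the weak-* closure of
`K(f) = {f·a : a ∈ A}`. -/
theorem mean_smul_char_mem_weakstar_closure
    {A : Type*} [NormedCommRing A] [NormedAlgebra ℂ A] [CompleteSpace A]
    (φ : A →L[ℂ] ℂ) (hφ : IsChar φ)
    (m : (A →L[ℂ] ℂ) →L[ℂ] ℂ) (hm : IsMean φ m) (f : A →L[ℂ] ℂ) :
    StrongDual.toWeakDual (m f • φ) ∈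
      closure (StrongDual.toWeakDual '' {g : A →L[ℂ] ℂ | ∃ a : A, g = fdot f a}) := by
  classical
  choose a ha using exists_exact_hit φ hφ m hm f
  refine mem_closure_of_tendsto (f := fun s : Finset A =>
      StrongDual.toWeakDual (fdot f (a s))) (b := (Filter.atTop : Filter (Finset A))) ?_ ?_
  · rw [_root_.tendsto_iff_forall_eval_tendsto_topDualPairing]
    intro y
    refine Filter.Tendsto.congr' ?_ tendsto_const_nhds
    filter_upwards [Filter.eventually_ge_atTop {y}] with s hs
    have hy : y ∈ s := hs (Finset.mem_singleton_self y)
    have := ha s y hy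
    show (m f • φ) y = fdot f (a s) y
    simp [fdot, this]
  · filter_upwards with s
    exact Set.mem_image_of_mem _ ⟨a s, rfl⟩

end CharAmen
end

section
/- Let A be a Banach algebra and φ a nonzero character. If the maximal ideal I_φ(A) = ker φ has a bounded right approximate identity, then A is φ-amenable. -/
open scoped Topology

namespace CharAmen


variable {E : Type*} [NormedAddCommGroup E] [NormedSpace ℂ E]

/-- a bounded right approximate identity in `ker φ` gives `φ`-amenability. -/
theorem brai_ker_implies_phi_amenable
    {A : Type*} [NormedRing A] [NormedAlgebra ℂ A] [CompleteSpace A]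
    (φ : A →L[ℂ] ℂ) (hφ : IsChar φ)
    (h : HasBRAI {a : A | φ a = 0}) :
    ∃ m : (A →L[ℂ] ℂ) →L[ℂ] ℂ, IsMean φ m := by
  obtain ⟨hφ0, hφm⟩ := hφ
  obtain ⟨ι, l, e, hl, he, ⟨M, hM⟩, happ⟩ := h
  haveI := hl
  obtain ⟨a, ha⟩ : ∃ a, φ a ≠ 0 := by
    by_contra hc; push_neg at hc
    exact hφ0 (ContinuousLinearMap.ext fun a => hc a)
  set a₀ : A := (φ a)⁻¹ • a with ha₀def
  have hφa₀ : φ a₀ = 1 := by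
    simp [ha₀def, inv_mul_cancel₀ ha]
  let U : Ultrafilter ι := Ultrafilter.of l
  have hU : (↑U : Filter ι) ≤ l := Ultrafilter.of_le l
  have hex : ∀ f : A →L[ℂ] ℂ,
      ∃ x : ℂ, Filter.Tendsto (fun i => f (a₀ * e i)) (↑U) (𝓝 x) := by
    intro f
    have hC : ∀ i, f (a₀ * e i) ∈ Metric.closedBall (0:ℂ) (‖f‖ * (‖a₀‖ * M)) := by
      intro i
      simp only [Metric.mem_closedBall, dist_zero_right]
      calc ‖f (a₀ * e i)‖ ≤ ‖f‖ * ‖a₀ * e i‖ := f.le_opNorm _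
        _ ≤ ‖f‖ * (‖a₀‖ * ‖e i‖) := by gcongr; exact norm_mul_le _ _
        _ ≤ ‖f‖ * (‖a₀‖ * M) := by gcongr; exact hM i
    obtain ⟨x, -, hx⟩ := (isCompact_closedBall (0:ℂ) (‖f‖ * (‖a₀‖ * M))).ultrafilter_le_nhds
      (U.map fun i => f (a₀ * e i))
      (Filter.le_principal_iff.mpr (Filter.mem_map.mpr (Filter.univ_mem' hC)))
    exact ⟨x, hx⟩
  set T : (A →L[ℂ] ℂ) → ℂ := fun f => (hex f).choose with hTdef
  have hT : ∀ f : A →L[ℂ] ℂ,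
      Filter.Tendsto (fun i => f (a₀ * e i)) (↑U) (𝓝 (T f)) := fun f => (hex f).choose_spec
  -- the mean
  refine ⟨LinearMap.mkContinuous
    { toFun := fun f => f a₀ - T f
      map_add' := by
        intro f g
        have h1 : T (f + g) = T f + T g := by
          refine tendsto_nhds_unique (hT (f + g)) ?_
          simpa using (hT f).add (hT g)
        simp only [ContinuousLinearMap.add_apply, h1]; ring
      map_smul' := by
        intro c f
        have h1 : T (c • f) = c * T f := by
          refine tendsto_nhds_unique (hT (c • f)) ?_
          simpa [smul_eq_mul] using (hT f).const_mul c
        simp only [ContinuousLinearMap.smul_apply, h1, RingHom.id_apply, smul_eq_mul]; ring }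
    (‖a₀‖ + ‖a₀‖ * M)
    (by
      intro f
      have hTb : ‖T f‖ ≤ ‖f‖ * (‖a₀‖ * M) := by
        refine le_of_tendsto (hT f).norm (Filter.Eventually.of_forall fun i => ?_)
        calc ‖f (a₀ * e i)‖ ≤ ‖f‖ * ‖a₀ * e i‖ := f.le_opNorm _
          _ ≤ ‖f‖ * (‖a₀‖ * ‖e i‖) := by gcongr; exact norm_mul_le _ _
          _ ≤ ‖f‖ * (‖a₀‖ * M) := by gcongr; exact hM i
      calc ‖f a₀ - T f‖ ≤ ‖f a₀‖ + ‖T f‖ := norm_sub_le _ _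
        _ ≤ ‖f‖ * ‖a₀‖ + ‖f‖ * (‖a₀‖ * M) := add_le_add (f.le_opNorm _) hTb
        _ = (‖a₀‖ + ‖a₀‖ * M) * ‖f‖ := by ring), ?_, ?_⟩
  · -- m φ = 1
    have hTφ : T φ = 0 := by
      refine tendsto_nhds_unique (hT φ) ?_
      have : (fun i => φ (a₀ * e i)) = fun _ => (0:ℂ) := by
        funext i
        rw [hφm, he i, mul_zero]
      rw [this]; exact tendsto_const_nhds
    simp [LinearMap.mkContinuous_apply, hTφ, hφa₀]
  · -- the module property
    intro f a'
    set b : A := a' * a₀ - φ a' • a₀ with hbdef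
    have hb : φ b = 0 := by
      simp [hbdef, map_sub, hφm, hφa₀, smul_eq_mul]
    have htb : Filter.Tendsto (fun i => b * e i) l (𝓝 b) := by
      rw [tendsto_iff_norm_sub_tendsto_zero]
      exact happ b hb
    have hfb : Filter.Tendsto (fun i => f (b * e i)) (↑U) (𝓝 (f b)) :=
      (f.continuous.tendsto b).comp (htb.mono_left hU)
    have hkey : T (fdot f a') = f b + φ a' * T f := by
      refine tendsto_nhds_unique (hT (fdot f a')) ?_
      have heq : (fun i => (fdot f a') (a₀ * e i))
          = fun i => f (b * e i) + φ a' * f (a₀ * e i) := by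
        funext i
        have h1 : a' * (a₀ * e i) = b * e i + φ a' • (a₀ * e i) := by
          simp [hbdef, sub_mul, smul_mul_assoc, mul_assoc]
        simp only [fdot_apply, h1, map_add, map_smul, smul_eq_mul]
      rw [heq]
      exact hfb.add ((hT f).const_mul _)
    have hfa : f (a' * a₀) = f b + φ a' * f a₀ := by
      have : f b = f (a' * a₀) - φ a' * f a₀ := by
        simp [hbdef, map_sub, map_smul, smul_eq_mul]
      rw [this]; ring
    simp only [LinearMap.mkContinuous_apply, LinearMap.coe_mk, AddHom.coe_mk, fdot_apply,
      hkey, hfa]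
    ring

end CharAmen
end

section
/- Let A be a Banach algebra, φ a nonzero character, and X a Banach space viewed as a Banach A-bimodule with both actions given by a·x = x·a = φ(a)x. If ker φ has a bounded right approximate identity, then every continuous derivation D : A → X* is zero. -/
open scoped Topology

namespace CharAmen


variable {E : Type*} [NormedAddCommGroup E] [NormedSpace ℂ E]

/-- if `ker φ` has a bounded right approximate identity then every
continuous derivation into the dual of a Banach `φ`-`A`-bimodule is zero. -/
theorem derivation_into_phi_bimodule_dual_eq_zero
    {A : Type*} [NormedRing A] [NormedAlgebra ℂ A] [CompleteSpace A]
    {X : Type*} [NormedAddCommGroup X] [NormedSpace ℂ X] [CompleteSpace X]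
    (φ : A →L[ℂ] ℂ) (hφ : IsChar φ)
    (h : HasBRAI {a : A | φ a = 0})
    (D : A →L[ℂ] (X →L[ℂ] ℂ))
    (hD : ∀ a b : A, D (a * b) = φ a • D b + φ b • D a) :
    D = 0 := by
  obtain ⟨hφ0, hmul⟩ := hφ
  obtain ⟨a0, ha0⟩ : ∃ a, φ a ≠ 0 := by
    by_contra h'
    push_neg at h'
    exact hφ0 (ContinuousLinearMap.ext fun a => h' a)
  set u : A := (φ a0)⁻¹ • a0 with hu
  have hφu : φ u = 1 := by
    simp [hu, inv_mul_cancel₀ ha0]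
  obtain ⟨ι, l, e, hne, heS, -, happ⟩ := h
  have hker : ∀ k : A, φ k = 0 → D k = 0 := by
    intro k hk
    have h1 : ∀ i, D (k * e i) = 0 := by
      intro i
      rw [hD]
      have : φ (e i) = 0 := heS i
      rw [hk, this]
      module
    have h2 : Filter.Tendsto (fun i => k * e i) l (𝓝 k) := by
      rw [tendsto_iff_norm_sub_tendsto_zero]
      exact happ k hk
    have h3 : Filter.Tendsto (fun i => D (k * e i)) l (𝓝 (D k)) :=
      (D.continuous.tendsto k).comp h2
    have h4 : Filter.Tendsto (fun i => D (k * e i)) l (𝓝 0) := by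
      simp only [h1]; exact tendsto_const_nhds
    exact tendsto_nhds_unique h3 h4
  have hDu : D u = 0 := by
    have h1 : φ (u * u - u) = 0 := by
      simp [hmul, hφu]
    have h2 : D (u * u - u) = 0 := hker _ h1
    have h3 : D (u * u) = D u + D u := by
      rw [hD, hφu]; module
    rw [map_sub, h3] at h2
    simpa using h2
  ext a x
  have hk : φ (a - φ a • u) = 0 := by
    simp [hφu]
  have hka := hker _ hk
  have hda : D a = 0 := by
    have hsplit : D a = D (a - φ a • u) + φ a • D u := by
      rw [map_sub, map_smul]; module
    rw [hsplit, hka, hDu]; module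
  rw [hda]; rfl

end CharAmen
end

section
/- Let A be a commutative, semisimple, regular Banach algebra and φ ∈ Φ(A) such that {φ} is a spectral set (i.e., ker φ is the only closed ideal whose hull is {φ}). Then every continuous point derivation at φ is zero; that is, every continuous linear functional d : A → ℂ satisfying d(ab) = φ(a)d(b) + φ(b)d(a) vanishes identically. -/
open scoped Topology

namespace CharAmen


variable {E : Type*} [NormedAddCommGroup E] [NormedSpace ℂ E]

/-- Characters viewed in the weak-* dual. -/
def IsCharW {A : Type*} [NormedRing A] [NormedAlgebra ℂ A] (χ : WeakDual ℂ A) : Prop :=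
  χ ≠ 0 ∧ ∀ a b : A, χ (a * b) = χ a * χ b

/-- Proposition 3.6 — in a commutative, semisimple, regular Banach
algebra, if `{φ}` is a spectral set then every continuous point derivation at `φ`
is zero. -/
theorem point_derivation_zero_of_spectral_set
    {A : Type*} [NormedCommRing A] [NormedAlgebra ℂ A] [CompleteSpace A]
    (φ : A →L[ℂ] ℂ) (hφ : IsChar φ)
    -- semisimplicity: the Jacobson radical is trivial
    (hss : (⊥ : Ideal A).jacobson = ⊥)
    -- regularity of the Gelfand transform
    (hreg : ∀ E : Set (WeakDual ℂ A), IsClosed E → (∀ χ ∈ E, IsCharW χ) →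
      ∀ ψ : WeakDual ℂ A, IsCharW ψ → ψ ∉ E →
        ∃ a : A, ψ a ≠ 0 ∧ ∀ χ ∈ E, χ a = 0)
    -- `{φ}` is a spectral set
    (hspec : ∀ J : Ideal A, IsClosed (J : Set A) →
      {ψ : A →L[ℂ] ℂ | IsChar ψ ∧ ∀ a ∈ J, ψ a = 0} = {φ} →
      (J : Set A) = {a : A | φ a = 0})
    (d : A →L[ℂ] ℂ)
    (hd : ∀ a b : A, d (a * b) = φ a * d b + φ b * d a) :
    d = 0 := by
  classical
  obtain ⟨hφ0, hφm⟩ := hφ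
  obtain ⟨a₁, ha₁⟩ : ∃ a, φ a ≠ 0 := by
    by_contra h
    push_neg at h
    exact hφ0 (by ext a; simpa using h a)
  set a₀ : A := (φ a₁)⁻¹ • a₁ with ha₀def
  have ha₀ : φ a₀ = 1 := by simp [ha₀def, inv_mul_cancel₀ ha₁]
  set S : Set A := {x | ∃ a b, φ a = 0 ∧ φ b = 0 ∧ x = a * b} with hS
  have hmulS : ∀ r : A, ∀ x ∈ S, r * x ∈ S := by
    rintro r x ⟨a, b, ha, hb, rfl⟩
    exact ⟨r * a, b, by simp [hφm, ha], hb, by ring⟩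
  have hsmul : ∀ (r x : A), x ∈ Submodule.span ℂ S → r * x ∈ Submodule.span ℂ S := by
    intro r x hx
    induction hx using Submodule.span_induction with
    | mem x hx => exact Submodule.subset_span (hmulS r x hx)
    | zero => simpa using Submodule.zero_mem (Submodule.span ℂ S)
    | add x y _ _ hx hy => simpa [mul_add] using Submodule.add_mem _ hx hy
    | smul c x _ hx => simpa [mul_smul_comm] using Submodule.smul_mem _ c hx
  set J0 : Ideal A :=
    { carrier := Submodule.span ℂ S
      add_mem' := fun hx hy => Submodule.add_mem _ hx hy
      zero_mem' := Submodule.zero_mem _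
      smul_mem' := fun r x hx => by simpa [smul_eq_mul] using hsmul r x hx } with hJ0
  -- a continuous functional vanishing on S vanishes on the closure of J0
  have key : ∀ g : A →L[ℂ] ℂ, (∀ x ∈ S, g x = 0) → ∀ x ∈ J0.closure, g x = 0 := by
    intro g hg x hx
    have hspan : (J0 : Set A) ⊆ g ⁻¹' {0} := by
      intro y hy
      have hy' : y ∈ Submodule.span ℂ S := hy
      have hle : Submodule.span ℂ S ≤ LinearMap.ker (g : A →ₗ[ℂ] ℂ) := by
        rw [Submodule.span_le]
        intro z hz
        simpa using hg z hz
      simpa using hle hy'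
    have hcl : closure (J0 : Set A) ⊆ g ⁻¹' {0} :=
      closure_minimal hspan (IsClosed.preimage g.continuous isClosed_singleton)
    have hx' : x ∈ closure (J0 : Set A) := by rwa [← Ideal.coe_closure]
    simpa using hcl hx'
  have hφS : ∀ x ∈ S, φ x = 0 := by
    rintro x ⟨a, b, ha, hb, rfl⟩
    simp [hφm, ha]
  have hdS : ∀ x ∈ S, d x = 0 := by
    rintro x ⟨a, b, ha, hb, rfl⟩
    simp [hd, ha, hb]
  have hmemJ : ∀ x ∈ S, x ∈ J0.closure := fun x hx =>
    (Ideal.coe_closure J0 ▸ subset_closure) (Submodule.subset_span hx)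
  have hull : {ψ : A →L[ℂ] ℂ | IsChar ψ ∧ ∀ a ∈ J0.closure, ψ a = 0} = {φ} := by
    ext ψ
    constructor
    · rintro ⟨⟨hψ0, hψm⟩, hψJ⟩
      have hker : ∀ x : A, φ x = 0 → ψ x = 0 := by
        intro x hx
        have h := hψJ _ (hmemJ _ ⟨x, x, hx, hx, rfl⟩)
        rw [hψm] at h
        exact mul_self_eq_zero.mp h
      have hrep : ∀ a, ψ a = φ a * ψ a₀ := by
        intro a
        have h := hker (a - φ a • a₀) (by simp [ha₀])
        rw [map_sub, map_smul, sub_eq_zero] at h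
        simpa [smul_eq_mul] using h
      have hψa₀ : ψ a₀ ≠ 0 := by
        intro h0
        apply hψ0
        ext a
        simp [hrep a, h0]
      have hsq : ψ a₀ * ψ a₀ = ψ a₀ := by
        have h := (hψm a₀ a₀).symm
        rw [hrep (a₀ * a₀), hφm, ha₀, one_mul, one_mul, hrep a₀, ha₀, one_mul] at h
        exact h
      have hone : ψ a₀ = 1 := by
        have h : ψ a₀ * (ψ a₀ - 1) = 0 := by linear_combination hsq
        rcases mul_eq_zero.mp h with h | h
        · exact absurd h hψa₀
        · exact sub_eq_zero.mp h
      simp only [Set.mem_singleton_iff]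
      ext a
      rw [hrep a, hone, mul_one]
    · rintro rfl
      exact ⟨⟨hφ0, hφm⟩, fun a ha => key _ hφS a ha⟩
  have hJset := hspec J0.closure (by rw [Ideal.coe_closure]; exact isClosed_closure) hull
  have hdker : ∀ x : A, φ x = 0 → d x = 0 := by
    intro x hx
    have : x ∈ (J0.closure : Set A) := by rw [hJset]; exact hx
    exact key d hdS x this
  have hdrep : ∀ a, d a = φ a * d a₀ := by
    intro a
    have h := hdker (a - φ a • a₀) (by simp [ha₀])
    rw [map_sub, map_smul, sub_eq_zero] at h
    simpa [smul_eq_mul] using h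
  have hc : d a₀ = 0 := by
    have h := hd a₀ a₀
    rw [hdrep (a₀ * a₀), hφm, ha₀] at h
    simpa using h
  ext a
  simp [hdrep a, hc]

end CharAmen
end

section
/- Let X be a closed linear A-left-invariant subspace of A* containing Hom(A,ℂ). If m is a φ-mean on X for some nonzero character φ, then for every nonzero character ψ of A, m(ψ) = 1 if ψ = φ and m(ψ) = 0 otherwise. -/
open scoped Topology Classical

namespace CharAmen


variable {E : Type*} [NormedAddCommGroup E] [NormedSpace ℂ E]

/-- Lemma 3.9 — a `φ`-mean on `X` takes the value `δ_φ` on characters. -/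
theorem mean_on_characters
    {A : Type*} [NormedRing A] [NormedAlgebra ℂ A] [CompleteSpace A]
    (φ : A →L[ℂ] ℂ) (hφ : IsChar φ)
    (X : Submodule ℂ (A →L[ℂ] ℂ)) (hXclosed : IsClosed (X : Set (A →L[ℂ] ℂ)))
    (hinv : ∀ f ∈ X, ∀ a : A, fdot f a ∈ X)
    (hchars : ∀ ψ : A →L[ℂ] ℂ, IsChar ψ → ψ ∈ X)
    (m : ↥X →L[ℂ] ℂ)
    (hm1 : m ⟨φ, hchars φ hφ⟩ = 1)
    (hm2 : ∀ (f : ↥X) (a : A), m ⟨fdot (f : A →L[ℂ] ℂ) a, hinv _ f.2 a⟩ = φ a * m f) :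
    ∀ (ψ : A →L[ℂ] ℂ) (hψ : IsChar ψ),
      m ⟨ψ, hchars ψ hψ⟩ = if ψ = φ then 1 else 0 := by
  intro ψ hψ
  split_ifs with h
  · subst h; exact hm1
  · have hne : ∃ a, ψ a ≠ φ a := by
      by_contra hc
      push_neg at hc
      exact h (ContinuousLinearMap.ext hc)
    obtain ⟨a, ha⟩ := hne
    have hfd : fdot ψ a = ψ a • ψ := by
      ext b; simp [fdot, hψ.2]
    have key : φ a * m ⟨ψ, hchars ψ hψ⟩ = ψ a * m ⟨ψ, hchars ψ hψ⟩ := by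
      have h1 := hm2 ⟨ψ, hchars ψ hψ⟩ a
      have h2 : (⟨fdot ψ a, hinv _ (hchars ψ hψ) a⟩ : ↥X) = ψ a • ⟨ψ, hchars ψ hψ⟩ :=
        Subtype.ext (by simpa using hfd)
      rw [h2, map_smul] at h1
      simpa using h1.symm
    have : (φ a - ψ a) * m ⟨ψ, hchars ψ hψ⟩ = 0 := by ring_nf; linear_combination key
    rcases mul_eq_zero.mp this with h' | h'
    · exact absurd (by linear_combination -h') ha
    · exact h'


end CharAmen
end

section
/- Let A and B be Banach algebras, φ ∈ Hom(B,ℂ), ψ ∈ Hom(A,ℂ), and let ρ be the character (a,b) ↦ ψ(a) + φ(b) on A ⊕_φ B. Then A ⊕_φ B is ρ-amenable if and only if A is ψ-amenable. -/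
open scoped Topology

namespace CharAmen


variable {E : Type*} [NormedAddCommGroup E] [NormedSpace ℂ E]

/-- The product of `A ⊕_φ B`. -/
noncomputable def mulOp {A B : Type*} [NormedRing A] [NormedAlgebra ℂ A]
    [NormedRing B] [NormedAlgebra ℂ B] (φ : B →L[ℂ] ℂ) (x y : A × B) : A × B :=
  (x.1 * y.1 + φ x.2 • y.1 + φ y.2 • x.1, x.2 * y.2)

/-- The character `(a, b) ↦ ψ(a) + φ(b)` of `A ⊕_φ B`. -/
noncomputable def rhoMap {A B : Type*} [NormedRing A] [NormedAlgebra ℂ A]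
    [NormedRing B] [NormedAlgebra ℂ B] (ψ : A →L[ℂ] ℂ) (φ : B →L[ℂ] ℂ) :
    (A × B) →L[ℂ] ℂ :=
  ψ.comp (ContinuousLinearMap.fst ℂ A B) + φ.comp (ContinuousLinearMap.snd ℂ A B)

set_option maxHeartbeats 1000000 in
/-- Theorem 4.6 — `A ⊕_φ B` is `ρ_{(ψ,φ)}`-amenable iff `A` is
`ψ`-amenable. -/
theorem oplus_rho_amenable_iff
    {A B : Type*} [NormedRing A] [NormedAlgebra ℂ A] [CompleteSpace A]
    [NormedRing B] [NormedAlgebra ℂ B] [CompleteSpace B]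
    (φ : B →L[ℂ] ℂ) (hφ : IsChar φ) (ψ : A →L[ℂ] ℂ) (hψ : IsChar ψ)
    -- the multiplication of `A ⊕_φ B` as a continuous bilinear map
    (μ : (A × B) →L[ℂ] (A × B) →L[ℂ] (A × B))
    (hμ : ∀ x y : A × B, μ x y = mulOp φ x y) :
    (∃ M : ((A × B) →L[ℂ] ℂ) →L[ℂ] ℂ, M (rhoMap ψ φ) = 1 ∧
        ∀ (F : (A × B) →L[ℂ] ℂ) (x : A × B), M (fdotB μ F x) = rhoMap ψ φ x * M F) ↔
    (∃ m : (A →L[ℂ] ℂ) →L[ℂ] ℂ, IsMean ψ m) := by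
  constructor
  · rintro ⟨M, hM1, hM2⟩
    set J : (A →L[ℂ] ℂ) →L[ℂ] ((A × B) →L[ℂ] ℂ) :=
      (ContinuousLinearMap.compL ℂ (A × B) A ℂ).flip (ContinuousLinearMap.fst ℂ A B) with hJ
    have hJapp : ∀ (f : A →L[ℂ] ℂ) (x : A × B), J f x = f x.1 := fun f x => rfl
    obtain ⟨a₀, ha₀⟩ : ∃ a : A, ψ a ≠ 0 := by
      by_contra h
      push_neg at h
      exact hψ.1 (by ext a; simpa using h a)
    have hsnd : M (φ.comp (ContinuousLinearMap.snd ℂ A B)) = 0 := by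
      have h0 : fdotB μ (φ.comp (ContinuousLinearMap.snd ℂ A B)) (a₀, 0) = 0 := by
        refine ContinuousLinearMap.ext fun y => ?_
        simp [fdotB, hμ, mulOp]
      have h1 := hM2 (φ.comp (ContinuousLinearMap.snd ℂ A B)) (a₀, 0)
      rw [h0, map_zero] at h1
      have hra : rhoMap ψ φ (a₀, (0 : B)) = ψ a₀ := by simp [rhoMap]
      rw [hra] at h1
      exact (mul_eq_zero.mp h1.symm).resolve_left ha₀
    have hrho : rhoMap ψ φ = J ψ + φ.comp (ContinuousLinearMap.snd ℂ A B) := by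
      refine ContinuousLinearMap.ext fun x => ?_
      simp [rhoMap, hJapp]
    have hkey : ∀ (f : A →L[ℂ] ℂ) (a : A),
        fdotB μ (J f) (a, (0 : B)) =
          J (fdot f a) + f a • φ.comp (ContinuousLinearMap.snd ℂ A B) := by
      intro f a
      refine ContinuousLinearMap.ext fun y => ?_
      simp only [fdotB_apply, hμ, mulOp, hJapp, ContinuousLinearMap.add_apply,
        ContinuousLinearMap.smul_apply, ContinuousLinearMap.coe_comp',
        Function.comp_apply, ContinuousLinearMap.coe_snd', fdot_apply,
        map_zero, zero_smul, add_zero, mul_zero]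
      rw [map_add, map_smul]
      simp [smul_eq_mul]
      ring
    refine ⟨M.comp J, ?_, ?_⟩
    · have : M (rhoMap ψ φ) = M (J ψ) + M (φ.comp (ContinuousLinearMap.snd ℂ A B)) := by
        rw [hrho, map_add]
      simp only [ContinuousLinearMap.comp_apply]
      rw [hM1] at this
      rw [hsnd, add_zero] at this
      exact this.symm
    · intro f a
      have h1 := hM2 (J f) (a, (0 : B))
      have hra : rhoMap ψ φ (a, (0 : B)) = ψ a := by simp [rhoMap]
      rw [hra, hkey f a, map_add, map_smul, hsnd, smul_zero, add_zero] at h1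
      simpa using h1
  · rintro ⟨m, hm1, hm2⟩
    set R : ((A × B) →L[ℂ] ℂ) →L[ℂ] (A →L[ℂ] ℂ) :=
      (ContinuousLinearMap.compL ℂ A (A × B) ℂ).flip (ContinuousLinearMap.inl ℂ A B) with hR
    have hRapp : ∀ (F : (A × B) →L[ℂ] ℂ) (a : A), R F a = F (a, 0) := fun F a => rfl
    refine ⟨m.comp R, ?_, ?_⟩
    · have : R (rhoMap ψ φ) = ψ := by
        ext a
        simp [hRapp, rhoMap]
      simp only [ContinuousLinearMap.comp_apply, this, hm1]
    · intro F x
      have hkey : R (fdotB μ F x) = fdot (R F) x.1 + φ x.2 • R F := by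
        ext a
        have hx : mulOp φ x (a, (0 : B)) = ((x.1 * a, (0 : B)) + φ x.2 • (a, (0 : B)) : A × B) := by
          simp [mulOp, Prod.ext_iff, Prod.smul_def]
        simp only [hRapp, fdotB_apply, hμ, hx, map_add, map_smul,
          ContinuousLinearMap.add_apply, ContinuousLinearMap.smul_apply, fdot_apply]
      simp only [ContinuousLinearMap.comp_apply, hkey, map_add, map_smul, hm2,
        smul_eq_mul, rhoMap, ContinuousLinearMap.add_apply,
        ContinuousLinearMap.coe_comp', Function.comp_apply,
        ContinuousLinearMap.coe_fst', ContinuousLinearMap.coe_snd']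
      ring

end CharAmen
end
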